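/- arXiv:2002.10099 — 3 statements merged into one kernel-verified Lean document; each statement's English description precedes it below -/
import Mathlib

section
/- Assume λ > λ₁/2 and λ₁ < λ₂, and set q₁ = √(1 − λ₁/(2λ)) e₁. Then the Hessian of ℓ at ±q₁ is positive definite; in particular ±q₁ are strict local minima of ℓ. -/
/-!
With `a = λ₁` and `c = 1 - a / (2λ) = t²`, completing the square gives
`ℓ x = ∑ᵢ (λᵢ - a) xᵢ² + λ (‖x‖² - c)² + λ (1 - c²)`. Both variable terms are nonnegative, and
by the gap `λ₁ < λ₂` they vanish together only at `x = ±t e₁`, so `±q₁` are the only minimisers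
of `ℓ`. The Hessian of `q ↦ B(q, q) + λ (‖q‖² - 1)²` is
`u ↦ 2 B(u, u) + 4λ (‖q‖² - 1) ‖u‖² + 8λ ⟪q, u⟫²`, which at `±t e₁` equals
`2 ∑ᵢ (λᵢ - a) uᵢ² + 8λ c u₁²`, positive for `u ≠ 0` by the same gap argument.
-/

open Topology

section

variable {E : Type*} [NormedAddCommGroup E] [InnerProductSpace ℝ E]

noncomputable def penalizedQuadratic (B : E →L[ℝ] E →L[ℝ] ℝ) (lam : ℝ) (q : E) : ℝ :=
  B q q + lam * (‖q‖ ^ 2 - 1) ^ 2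

lemma hasFDerivAt_penalizedQuadratic (B : E →L[ℝ] E →L[ℝ] ℝ) (lam : ℝ) (q : E) :
    HasFDerivAt (penalizedQuadratic B lam)
      ((B + B.flip) q + (4 * lam * (‖q‖ ^ 2 - 1)) • innerSL ℝ q) q := by
  have h := (B.hasFDerivAt.clm_apply (hasFDerivAt_id q)).fun_add
    ((((hasFDerivAt_id q).norm_sq.sub_const 1).pow 2).const_mul lam)
  refine h.congr_fderiv ?_
  ext u
  simp only [add_apply, ContinuousLinearMap.comp_id, ContinuousLinearMap.flip_apply, smul_apply,
    innerSL_apply_apply, id_eq, nsmul_eq_mul, smul_eq_mul]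
  ring

lemma fderiv_penalizedQuadratic (B : E →L[ℝ] E →L[ℝ] ℝ) (lam : ℝ) :
    fderiv ℝ (penalizedQuadratic B lam) =
      fun q => (B + B.flip) q + (4 * lam * (‖q‖ ^ 2 - 1)) • innerSL ℝ q :=
  funext fun q => (hasFDerivAt_penalizedQuadratic B lam q).fderiv

lemma fderiv_fderiv_penalizedQuadratic_apply (B : E →L[ℝ] E →L[ℝ] ℝ) (lam : ℝ) (q u : E) :
    fderiv ℝ (fderiv ℝ (penalizedQuadratic B lam)) q u u =
      2 * B u u + 4 * lam * (‖q‖ ^ 2 - 1) * ‖u‖ ^ 2 + 8 * lam * inner ℝ q u ^ 2 := by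
  have hcoeff : HasFDerivAt (fun q : E => 4 * lam * (‖q‖ ^ 2 - 1))
      ((4 * lam) • (2 • innerSL ℝ q)) q := by
    simpa using ((hasFDerivAt_id q).norm_sq.sub_const 1).const_mul (4 * lam)
  have h := (B + B.flip).hasFDerivAt.fun_add (hcoeff.fun_smul (innerSL ℝ).hasFDerivAt)
  rw [fderiv_penalizedQuadratic, h.fderiv]
  simp only [add_apply, ContinuousLinearMap.flip_apply, smul_apply,
    ContinuousLinearMap.smulRight_apply, nsmul_eq_mul, smul_eq_mul]
  rw [innerSL_apply_apply, innerSL_apply_apply, real_inner_self_eq_norm_sq]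
  ring

end

lemma le_of_forall_ne_lt {α β : Type*} [Preorder β] {f : α → β} {a : α}
    (h : ∀ x ≠ a, f a < f x) (x : α) : f a ≤ f x := by
  rcases eq_or_ne x a with rfl | hx
  exacts [le_rfl, (h x hx).le]

section

variable {ι : Type*} [Fintype ι]

noncomputable def diagForm (Λ : ι → ℝ) :
    EuclideanSpace ℝ ι →L[ℝ] EuclideanSpace ℝ ι →L[ℝ] ℝ :=
  ∑ i, Λ i • (EuclideanSpace.proj i).smulRight (EuclideanSpace.proj i)

lemma diagForm_apply_self (Λ : ι → ℝ) (u : EuclideanSpace ℝ ι) :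
    diagForm Λ u u = ∑ i, Λ i * u i ^ 2 := by
  simp [diagForm, sq]

variable {Λ : ι → ℝ} {k : ι}

lemma sum_sub_mul_sq_nonneg (hk : ∀ i, Λ k ≤ Λ i) (u : EuclideanSpace ℝ ι) :
    0 ≤ ∑ i, (Λ i - Λ k) * u i ^ 2 :=
  Finset.sum_nonneg fun i _ => mul_nonneg (sub_nonneg.2 (hk i)) (sq_nonneg _)

lemma eq_single_of_sum_sub_mul_sq_eq_zero [DecidableEq ι] (hgap : ∀ i ≠ k, Λ k < Λ i)
    {u : EuclideanSpace ℝ ι} (h : ∑ i, (Λ i - Λ k) * u i ^ 2 = 0) :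
    u = EuclideanSpace.single k (u k) := by
  have hterm := (Finset.sum_eq_zero_iff_of_nonneg fun i _ =>
    mul_nonneg (sub_nonneg.2 (le_of_forall_ne_lt hgap i)) (sq_nonneg (u i))).1 h
  ext i
  by_cases hi : i = k
  · simp [hi]
  · have := hterm i (Finset.mem_univ i)
    simpa [hi, (sub_pos.2 (hgap i hi)).ne'] using this

lemma penalizedQuadratic_diagForm_eq {lam c : ℝ} (hc : Λ k = 2 * lam * (1 - c))
    (x : EuclideanSpace ℝ ι) :
    penalizedQuadratic (diagForm Λ) lam x =
      ∑ i, (Λ i - Λ k) * x i ^ 2 + lam * (‖x‖ ^ 2 - c) ^ 2 + lam * (1 - c ^ 2) := by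
  simp only [penalizedQuadratic, diagForm_apply_self, sub_mul, Finset.sum_sub_distrib,
    ← Finset.mul_sum, ← EuclideanSpace.real_norm_sq_eq, hc]
  ring

variable [DecidableEq ι] {lam s : ℝ}

lemma fderiv_fderiv_penalizedQuadratic_diagForm_single_pos (hgap : ∀ i ≠ k, Λ k < Λ i)
    (hlam : 0 < lam) (hs : s ≠ 0) (hc : Λ k = 2 * lam * (1 - s ^ 2))
    {u : EuclideanSpace ℝ ι} (hu : u ≠ 0) :
    0 < fderiv ℝ (fderiv ℝ (penalizedQuadratic (diagForm Λ) lam))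
      (EuclideanSpace.single k s) u u := by
  have hform : fderiv ℝ (fderiv ℝ (penalizedQuadratic (diagForm Λ) lam))
      (EuclideanSpace.single k s) u u =
      2 * ∑ i, (Λ i - Λ k) * u i ^ 2 + 8 * lam * (s * u k) ^ 2 := by
    simp only [fderiv_fderiv_penalizedQuadratic_apply, diagForm_apply_self, PiLp.norm_single,
      EuclideanSpace.inner_single_left, Real.norm_eq_abs, sq_abs, conj_trivial, sub_mul,
      Finset.sum_sub_distrib, ← Finset.mul_sum, ← EuclideanSpace.real_norm_sq_eq, hc]
    ring
  rw [hform]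
  have hS := sum_sub_mul_sq_nonneg (le_of_forall_ne_lt hgap) u
  refine lt_of_le_of_ne (by positivity) fun h => hu ?_
  have hS0 : ∑ i, (Λ i - Λ k) * u i ^ 2 = 0 := by nlinarith [sq_nonneg (s * u k)]
  have huk : u k = 0 := by
    have : (s * u k) ^ 2 = 0 := by nlinarith [sq_nonneg (s * u k)]
    simpa [hs] using this
  rw [eq_single_of_sum_sub_mul_sq_eq_zero hgap hS0, huk]
  simp

lemma penalizedQuadratic_diagForm_single_lt (hgap : ∀ i ≠ k, Λ k < Λ i) (hlam : 0 < lam)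
    (hc : Λ k = 2 * lam * (1 - s ^ 2)) {x : EuclideanSpace ℝ ι}
    (h₁ : x ≠ EuclideanSpace.single k s) (h₂ : x ≠ EuclideanSpace.single k (-s)) :
    penalizedQuadratic (diagForm Λ) lam (EuclideanSpace.single k s) <
      penalizedQuadratic (diagForm Λ) lam x := by
  have hsingle : ∑ i, (Λ i - Λ k) * EuclideanSpace.single k s i ^ 2 = 0 :=
    Finset.sum_eq_zero fun i _ => by by_cases hi : i = k <;> simp [hi]
  rw [penalizedQuadratic_diagForm_eq hc, penalizedQuadratic_diagForm_eq hc, hsingle,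
    PiLp.norm_single, Real.norm_eq_abs, sq_abs, sub_self]
  have hS := sum_sub_mul_sq_nonneg (le_of_forall_ne_lt hgap) x
  by_contra hle
  have hS0 : ∑ i, (Λ i - Λ k) * x i ^ 2 = 0 := by nlinarith [sq_nonneg (‖x‖ ^ 2 - s ^ 2)]
  have hx := eq_single_of_sum_sub_mul_sq_eq_zero hgap hS0
  have hnorm : ‖x‖ ^ 2 = s ^ 2 := by
    have : lam * (‖x‖ ^ 2 - s ^ 2) ^ 2 = 0 := by nlinarith [sq_nonneg (‖x‖ ^ 2 - s ^ 2)]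
    simpa [hlam.ne', sub_eq_zero] using this
  rw [hx, PiLp.norm_single, Real.norm_eq_abs, sq_abs, sq_eq_sq_iff_eq_or_eq_neg] at hnorm
  rcases hnorm with h | h <;> rw [h] at hx <;> contradiction

end

lemma eventually_nhdsNE_lt_of_lt_of_ne_of_ne {X α : Type*} [TopologicalSpace X] [T1Space X]
    [LT α] {f : X → α} {p p' : X} (hp : p ≠ p') (h : ∀ x, x ≠ p → x ≠ p' → f p < f x) :
    ∀ᶠ x in 𝓝[≠] p, f p < f x := by
  filter_upwards [self_mem_nhdsWithin, nhdsWithin_le_nhds (isOpen_compl_singleton.mem_nhds hp)]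
    with x hx hx' using h x hx hx'

lemma Monotone.apply_mk_zero_lt {α : Type*} [Preorder α] {d : ℕ} {Λ : Fin d → α}
    (hΛ : Monotone Λ) (h1 : 1 < d) (h01 : Λ ⟨0, by omega⟩ < Λ ⟨1, h1⟩) (i : Fin d)
    (hi : i ≠ ⟨0, by omega⟩) : Λ ⟨0, by omega⟩ < Λ i :=
  h01.trans_le (hΛ (Fin.le_def.2 (Nat.one_le_iff_ne_zero.2 fun h => hi (Fin.ext h))))

/-- If `λ > λ₁/2` and `λ₁ < λ₂`, then at `±q₁ = ±√(1 − λ₁/(2λ)) e₁` the Hessian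
of `ℓ` is positive definite; in particular `±q₁` are strict local minima of `ℓ`. -/
theorem stmt8 (d : ℕ) (hd : 2 ≤ d) (Λ : Fin d → ℝ)
    (hΛmono : Monotone Λ) (lam : ℝ) (hlam : 0 < lam)
    (ℓ : EuclideanSpace ℝ (Fin d) → ℝ)
    (hℓ : ∀ q : EuclideanSpace ℝ (Fin d),
      ℓ q = ∑ i, Λ i * q i ^ 2 + lam * (‖q‖ ^ 2 - 1) ^ 2)
    (hlam1 : Λ ⟨0, by omega⟩ / 2 < lam)
    (h12 : Λ ⟨0, by omega⟩ < Λ ⟨1, by omega⟩)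
    (q1 : EuclideanSpace ℝ (Fin d))
    (hq1 : q1 = Real.sqrt (1 - Λ ⟨0, by omega⟩ / (2 * lam)) •
      EuclideanSpace.single (⟨0, by omega⟩ : Fin d) (1 : ℝ)) :
    (∀ u : EuclideanSpace ℝ (Fin d), u ≠ 0 → 0 < fderiv ℝ (fderiv ℝ ℓ) q1 u u) ∧
    (∀ u : EuclideanSpace ℝ (Fin d), u ≠ 0 → 0 < fderiv ℝ (fderiv ℝ ℓ) (-q1) u u) ∧
    (∀ᶠ x in 𝓝[≠] q1, ℓ q1 < ℓ x) ∧
    (∀ᶠ x in 𝓝[≠] (-q1), ℓ (-q1) < ℓ x) := by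
  set k : Fin d := ⟨0, by omega⟩
  set t := Real.sqrt (1 - Λ k / (2 * lam))
  have hgap : ∀ i ≠ k, Λ k < Λ i := hΛmono.apply_mk_zero_lt (by omega) h12
  have hc : 0 < 1 - Λ k / (2 * lam) := by
    rw [sub_pos, div_lt_one (by positivity)]
    linarith
  have ht : 0 < t := Real.sqrt_pos.2 hc
  have hΛk : ∀ s, s ^ 2 = t ^ 2 → Λ k = 2 * lam * (1 - s ^ 2) := fun s hs => by
    rw [hs, Real.sq_sqrt hc.le]
    field_simp
    ring
  have hℓ' : ℓ = penalizedQuadratic (diagForm Λ) lam :=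
    funext fun q => by rw [hℓ, penalizedQuadratic, diagForm_apply_self]
  have hq1' : q1 = EuclideanSpace.single k t := by
    ext i
    by_cases hi : i = k <;> simp [hq1, hi]
  have hnq1 : -q1 = EuclideanSpace.single k (-t) := by rw [hq1', ← PiLp.single_neg]
  have hne : EuclideanSpace.single k t ≠ EuclideanSpace.single k (-t) := by
    intro h
    have := congrArg (· k) h
    rw [PiLp.single_eq_same, PiLp.single_eq_same] at this
    linarith
  rw [hnq1, hq1', hℓ']
  refine ⟨fun u hu => ?_, fun u hu => ?_, ?_, ?_⟩
  · exact fderiv_fderiv_penalizedQuadratic_diagForm_single_pos hgap hlam ht.ne' (hΛk t rfl) hu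
  · exact fderiv_fderiv_penalizedQuadratic_diagForm_single_pos hgap hlam (neg_ne_zero.2 ht.ne')
      (hΛk (-t) (neg_sq t)) hu
  · exact eventually_nhdsNE_lt_of_lt_of_ne_of_ne hne fun x h₁ h₂ =>
      penalizedQuadratic_diagForm_single_lt hgap hlam (hΛk t rfl) h₁ h₂
  · refine eventually_nhdsNE_lt_of_lt_of_ne_of_ne hne.symm fun x h₁ h₂ => ?_
    exact penalizedQuadratic_diagForm_single_lt hgap hlam (hΛk (-t) (neg_sq t)) h₁ (by rwa [neg_neg])
end

section
/- Let D be a symmetric d×d real matrix, let λ ∈ ℝ, and let v ∈ ℝᵈ satisfy Dv = 0 and ‖v‖ = 1. Define ℓ(q) = qᵀDq + λ(‖q‖² − 1)² and h(q) = ‖q − v‖² / (1 + ‖q‖²). Then for every q ∈ ℝᵈ, ⟨∇h(q), ∇ℓ(q)⟩ = 8 (vᵀq) · (qᵀDq + λ(‖q‖² − 1)²) / (1 + ‖q‖²)². -/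
/-!
The gradient of the loss is `∇ℓ(q) = 2 A q + 4λ(‖q‖² - 1) q`, a combination of `A q` and
`q`, while `(1 + ‖q‖²)² ∇h(q) = 2 (1 + ‖q‖²)(q - v) - 2 ‖q - v‖² q`. In the pairing,
`⟪v, A q⟫ = ⟪A v, q⟫` vanishes, `‖v‖ = 1` turns `‖q - v‖²` into `‖q‖² - 2⟪v, q⟫ + 1`, and
everything not proportional to `⟪v, q⟫` cancels.
-/

open scoped Matrix RealInnerProductSpace Gradient

section
variable {E : Type*} [NormedAddCommGroup E] [InnerProductSpace ℝ E]

def quarticLoss (A : E →L[ℝ] E) (lam : ℝ) (x : E) : ℝ :=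
  ⟪x, A x⟫ + lam * (‖x‖ ^ 2 - 1) ^ 2

noncomputable def liapunov (v x : E) : ℝ :=
  ‖x - v‖ ^ 2 / (1 + ‖x‖ ^ 2)

theorem hasFDerivAt_inner_map_self {A : E →L[ℝ] E} (hA : (A : E →ₗ[ℝ] E).IsSymmetric) (q : E) :
    HasFDerivAt (fun x => ⟪x, A x⟫) (2 • innerSL ℝ (A q)) q := by
  refine ((hasFDerivAt_id q).inner ℝ A.hasFDerivAt).congr_fderiv ?_
  ext y
  simpa [two_smul, real_inner_comm] using (hA q y).symm

theorem hasGradientAt_quarticLoss [CompleteSpace E] {A : E →L[ℝ] E}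
    (hA : (A : E →ₗ[ℝ] E).IsSymmetric) (lam : ℝ) (q : E) :
    HasGradientAt (quarticLoss A lam) ((2 : ℝ) • A q + (4 * lam * (‖q‖ ^ 2 - 1)) • q) q := by
  have hpen :
      HasDerivAt (fun t : ℝ => lam * (t - 1) ^ 2) (lam * (2 * (‖q‖ ^ 2 - 1))) (‖q‖ ^ 2) := by
    simpa using (((hasDerivAt_id (‖q‖ ^ 2)).sub_const 1).pow 2).const_mul lam
  rw [hasGradientAt_iff_hasFDerivAt]
  refine ((hasFDerivAt_inner_map_self hA q).add
    (hpen.comp_hasFDerivAt q (hasStrictFDerivAt_norm_sq q).hasFDerivAt)).congr_fderiv ?_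
  ext y
  simp
  ring

theorem fderiv_liapunov_apply (v q y : E) :
    fderiv ℝ (liapunov v) q y =
      (2 * ⟪q - v, y⟫ * (1 + ‖q‖ ^ 2) - 2 * ‖q - v‖ ^ 2 * ⟪q, y⟫) / (1 + ‖q‖ ^ 2) ^ 2 := by
  have hpos : (0 : ℝ) < 1 + ‖q‖ ^ 2 := by positivity
  have hnum : HasFDerivAt (fun x : E => ‖x - v‖ ^ 2) _ q := ((hasFDerivAt_id q).sub_const v).norm_sq
  have hden : HasFDerivAt (fun x : E => (1 + ‖x‖ ^ 2)⁻¹) _ q :=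
    (hasDerivAt_inv hpos.ne').comp_hasFDerivAt q ((hasFDerivAt_id q).norm_sq.const_add 1)
  rw [show liapunov v = fun x => ‖x - v‖ ^ 2 * (1 + ‖x‖ ^ 2)⁻¹ from
    funext fun x => div_eq_mul_inv _ _, (hnum.fun_mul hden).fderiv]
  simp [inner_sub_left]
  field_simp
  ring

theorem inner_gradient_liapunov_gradient_quarticLoss [CompleteSpace E] {A : E →L[ℝ] E}
    (hA : (A : E →ₗ[ℝ] E).IsSymmetric) {v : E} (hAv : A v = 0) (hv : ‖v‖ = 1) (lam : ℝ) (q : E) :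
    ⟪∇ (liapunov v) q, ∇ (quarticLoss A lam) q⟫ =
      8 * ⟪v, q⟫ * quarticLoss A lam q / (1 + ‖q‖ ^ 2) ^ 2 := by
  have hvAq : ⟪v, A q⟫ = 0 := by
    rw [← ContinuousLinearMap.coe_coe A, ← hA, ContinuousLinearMap.coe_coe, hAv, inner_zero_left]
  have hdist : ‖q - v‖ ^ 2 = ‖q‖ ^ 2 - 2 * ⟪v, q⟫ + 1 := by
    rw [norm_sub_sq_real, hv, real_inner_comm]; ring
  rw [(hasGradientAt_quarticLoss hA lam q).gradient, inner_gradient_left, fderiv_liapunov_apply,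
    hdist, quarticLoss]
  simp only [inner_add_right, inner_sub_left, real_inner_smul_right, hvAq,
    real_inner_self_eq_norm_sq, real_inner_comm q v]
  field_simp
  ring

end

/-- For symmetric `D`, `Dv = 0`, `‖v‖ = 1`,
`ℓ(q) = qᵀDq + λ(‖q‖² − 1)²` and `h(q) = ‖q − v‖²/(1 + ‖q‖²)`, one has
`⟨∇h(q), ∇ℓ(q)⟩ = 8 (vᵀq)(qᵀDq + λ(‖q‖² − 1)²)/(1 + ‖q‖²)²` for every `q`. -/
theorem stmt13 (d : ℕ) (D : Matrix (Fin d) (Fin d) ℝ) (hD : Dᵀ = D)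
    (lam : ℝ) (v : EuclideanSpace ℝ (Fin d))
    (hv : (D *ᵥ fun i => v i) = 0) (hvnorm : ‖v‖ = 1)
    (ℓ h : EuclideanSpace ℝ (Fin d) → ℝ)
    (hℓ : ∀ q : EuclideanSpace ℝ (Fin d),
      ℓ q = (fun i => q i) ⬝ᵥ (D *ᵥ fun i => q i) + lam * (‖q‖ ^ 2 - 1) ^ 2)
    (hh : ∀ q : EuclideanSpace ℝ (Fin d),
      h q = ‖q - v‖ ^ 2 / (1 + ‖q‖ ^ 2)) :
    ∀ q : EuclideanSpace ℝ (Fin d),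
      (inner ℝ (gradient h q) (gradient ℓ q) : ℝ) =
        8 * (inner ℝ v q : ℝ) *
          ((fun i => q i) ⬝ᵥ (D *ᵥ fun i => q i) + lam * (‖q‖ ^ 2 - 1) ^ 2) /
          (1 + ‖q‖ ^ 2) ^ 2 := by
  intro q
  set A := Matrix.toEuclideanCLM (𝕜 := ℝ) D
  have hA : (A : EuclideanSpace ℝ (Fin d) →ₗ[ℝ] _).IsSymmetric :=
    Matrix.isSymmetric_toEuclideanLin_iff.2 (by
      rwa [Matrix.IsHermitian, Matrix.conjTranspose_eq_transpose_of_trivial])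
  have hAv : A v = 0 := by
    ext i
    exact congrFun hv i
  have hℓA : ℓ = quarticLoss A lam := funext fun x => by
    rw [hℓ, quarticLoss, Matrix.inner_toEuclideanCLM]
  have hhv : h = liapunov v := funext hh
  rw [hℓA, hhv, inner_gradient_liapunov_gradient_quarticLoss hA hAv hvnorm, quarticLoss,
    Matrix.inner_toEuclideanCLM]
end

section
/- Let D = diag(λ₁, …, λ_d) with 0 = λ₁ < λ₂ ≤ … ≤ λ_d and let λ > 0, and define ℓ(q) = qᵀDq + λ(‖q‖² − 1)². Suppose q : [0, ∞) → ℝᵈ is differentiable and satisfies the gradient flow equation q'(t) = −∇ℓ(q(t)) for all t ≥ 0, with initial condition e₁ᵀ q(0) > 0. Then q(t) → e₁ as t → ∞. (Symmetrically, if e₁ᵀ q(0) < 0 then q(t) → −e₁.) -/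
/-!
Along the flow every coordinate solves `qᵢ' = -(2λᵢ + c) qᵢ` with the common scalar
`c = 4λ(‖q‖² - 1)`, so `qᵢ(t) = qᵢ(0) e^{-2λᵢt - w(t)}` where `w' = c`. Then `z = e^{2w}` solves the
linear equation `z' = 8λ(A - z)` with `A(t) = ∑ qᵢ(0)² e^{-4λᵢt} → q₁(0)²`, hence `z → q₁(0)²`,
i.e. `e^{-w} → 1/|q₁(0)|`, while `e^{-2λᵢt} → 0` for `i ≠ 1`.
-/

open Filter Topology Set Real

theorem exists_hasDerivAt_of_continuousOn_Ici {c : ℝ → ℝ} {a : ℝ} (hc : ContinuousOn c (Ici a)) :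
    ∃ w : ℝ → ℝ, w a = 0 ∧ ∀ t, a ≤ t → HasDerivAt w (c t) t := by
  have hc' : Continuous fun t => c (max a t) :=
    hc.comp_continuous (continuous_const.max continuous_id) fun t => le_max_left a t
  refine ⟨fun t => ∫ τ in a..t, c (max a τ), intervalIntegral.integral_same, fun t ht => ?_⟩
  simpa [max_eq_right ht] using (hc'.integral_hasStrictDerivAt a t).hasDerivAt

theorem eq_mul_exp_of_hasDerivAt {y w c : ℝ → ℝ} {β t : ℝ} (ht : 0 ≤ t)
    (hw : ∀ s, 0 ≤ s → HasDerivAt w (c s) s)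
    (hy : ∀ s, 0 ≤ s → HasDerivAt y (-(β + c s) * y s) s) :
    y t = y 0 * exp (-(β * t) - (w t - w 0)) := by
  have hF : ∀ s, 0 ≤ s → HasDerivAt (fun τ => y τ * exp (β * τ + w τ)) 0 s := by
    intro s hs
    refine ((hy s hs).mul (((hasDerivAt_id' s).const_mul β).add (hw s hs)).exp).congr_deriv ?_
    ring
  have hconst := constant_of_has_deriv_right_zero
    (f := fun τ => y τ * exp (β * τ + w τ)) (a := 0) (b := t)
    (fun s hs => (hF s hs.1).continuousAt.continuousWithinAt)
    (fun s hs => (hF s hs.1).hasDerivWithinAt) t ⟨ht, le_rfl⟩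
  simp only [mul_zero, zero_add] at hconst
  rw [show -(β * t) - (w t - w 0) = w 0 - (β * t + w t) by ring, exp_sub, mul_div_assoc', ← hconst]
  field_simp

theorem eventually_lt_of_hasDerivAt_eq_mul_sub {f g : ℝ → ℝ} {k a b : ℝ} (hk : 0 < k)
    (hf : ∀ t, 0 ≤ t → HasDerivAt f (k * (g t - f t)) t) (hg : Tendsto g atTop (𝓝 a))
    (hab : a < b) : ∀ᶠ t in atTop, f t < b := by
  obtain ⟨m, ham, hmb⟩ := exists_between hab
  obtain ⟨T, hT⟩ := eventually_atTop.1
    (((tendsto_order.1 hg).2 m ham).and (eventually_ge_atTop 0))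
  have hbound : ∀ t, T ≤ t → f t ≤ m + (f T - m) * exp (-k * (t - T)) := by
    intro t ht
    have hfT : ∀ s, T ≤ s → HasDerivAt f (k * (g s - f s)) s := fun s hs => hf s (hT s hs).2
    have := le_gronwallBound_of_liminf_deriv_right_le (f := f) (δ := f T) (K := -k) (ε := k * m)
      (a := T) (b := t) (fun s hs => (hfT s hs.1).continuousAt.continuousWithinAt)
      (fun s hs _ hr => (hfT s hs.1).hasDerivWithinAt.liminf_right_slope_le hr) le_rfl
      (fun s hs => by nlinarith [(hT s hs.1).1]) t ⟨ht, le_rfl⟩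
    rw [gronwallBound_of_K_ne_0 (by linarith)] at this
    convert this using 1
    field_simp
    ring
  have hdecay : Tendsto (fun t => m + (f T - m) * exp (-k * (t - T))) atTop
      (𝓝 (m + (f T - m) * 0)) :=
    tendsto_const_nhds.add (tendsto_const_nhds.mul (tendsto_exp_atBot.comp
      ((tendsto_atTop_add_const_right _ _ tendsto_id).const_mul_atTop_of_neg (neg_lt_zero.2 hk))))
  filter_upwards [eventually_ge_atTop T, (tendsto_order.1 hdecay).2 b (by simpa using hmb)]
    with t ht hlt
  exact (hbound t ht).trans_lt hlt

theorem tendsto_of_hasDerivAt_eq_mul_sub {f g : ℝ → ℝ} {k a : ℝ} (hk : 0 < k)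
    (hf : ∀ t, 0 ≤ t → HasDerivAt f (k * (g t - f t)) t) (hg : Tendsto g atTop (𝓝 a)) :
    Tendsto f atTop (𝓝 a) := by
  refine tendsto_order.2
    ⟨fun b hb => ?_, fun b hb => eventually_lt_of_hasDerivAt_eq_mul_sub hk hf hg hb⟩
  have hneg : ∀ t, 0 ≤ t → HasDerivAt (-f) (k * ((-g) t - (-f) t)) t :=
    fun t ht => (hf t ht).neg.congr_deriv (by simp only [Pi.neg_apply]; ring)
  filter_upwards [eventually_lt_of_hasDerivAt_eq_mul_sub hk hneg hg.neg (neg_lt_neg hb)] with t ht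
  exact neg_lt_neg_iff.1 ht

theorem tendsto_euclideanSpace_iff {ι α : Type*} {l : Filter α}
    {f : α → EuclideanSpace ℝ ι} {x : EuclideanSpace ℝ ι} :
    Tendsto f l (𝓝 x) ↔ ∀ i, Tendsto (fun a => f a i) l (𝓝 (x i)) := by
  rw [(PiLp.homeomorph 2 _).isInducing.tendsto_nhds_iff, tendsto_pi_nhds]
  rfl

theorem tendsto_exp_neg_mul_ite {ι : Type*} [DecidableEq ι] {μ : ι → ℝ} {i₀ : ι} (hμ₀ : μ i₀ = 0)
    (hμ : ∀ i, i ≠ i₀ → 0 < μ i) (i : ι) :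
    Tendsto (fun t => exp (-(μ i * t))) atTop (𝓝 (if i = i₀ then 1 else 0)) := by
  split_ifs with hi
  · simp [hi, hμ₀]
  · exact tendsto_exp_atBot.comp
      (tendsto_neg_atTop_atBot.comp (tendsto_id.const_mul_atTop (hμ i hi)))

section GradientFlow

variable {d : ℕ}

noncomputable def loss (Λ : Fin d → ℝ) (lam : ℝ) (x : EuclideanSpace ℝ (Fin d)) : ℝ :=
  ∑ i, Λ i * x i ^ 2 + lam * (‖x‖ ^ 2 - 1) ^ 2

theorem hasGradientAt_loss (Λ : Fin d → ℝ) (lam : ℝ) (x : EuclideanSpace ℝ (Fin d)) :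
    HasGradientAt (loss Λ lam)
      (WithLp.toLp 2 fun i => (2 * Λ i + 4 * lam * (‖x‖ ^ 2 - 1)) * x i) x := by
  have hquad (i : Fin d) :=
    ((EuclideanSpace.proj (𝕜 := ℝ) i).hasFDerivAt (x := x).pow 2).const_mul (Λ i)
  have hnorm := (((hasStrictFDerivAt_norm_sq x).hasFDerivAt.sub_const 1).pow 2).const_mul lam
  rw [hasGradientAt_iff_hasFDerivAt]
  refine ((HasFDerivAt.fun_sum fun i _ => hquad i).add hnorm).congr_fderiv ?_
  ext v
  simp only [PiLp.proj_apply, Nat.add_one_sub_one, pow_one, nsmul_eq_mul, Nat.cast_ofNat,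
    add_apply, sum_apply, smul_apply, smul_eq_mul, coe_innerSL_apply, PiLp.inner_apply,
    RCLike.inner_apply, conj_trivial, Finset.mul_sum, ← Finset.sum_add_distrib,
    InnerProductSpace.toDual_apply_apply]
  exact Finset.sum_congr rfl fun i _ => by ring

variable {Λ : Fin d → ℝ} {lam : ℝ} {q : ℝ → EuclideanSpace ℝ (Fin d)}

theorem hasDerivAt_apply_of_gradientFlow {t : ℝ}
    (hq : HasDerivAt q (-(gradient (loss Λ lam) (q t))) t) (i : Fin d) :
    HasDerivAt (fun s => q s i) (-(2 * Λ i + 4 * lam * (‖q t‖ ^ 2 - 1)) * q t i) t := by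
  rw [(hasGradientAt_loss Λ lam (q t)).gradient] at hq
  refine ((EuclideanSpace.proj i).hasFDerivAt.comp_hasDerivAt t hq).congr_deriv ?_
  simp only [PiLp.proj_apply, PiLp.neg_apply]
  ring

theorem exists_apply_eq_of_gradientFlow
    (hq : ∀ t, 0 ≤ t → HasDerivAt q (-(gradient (loss Λ lam) (q t))) t) :
    ∃ w : ℝ → ℝ, (∀ t, 0 ≤ t → HasDerivAt w (4 * lam * (‖q t‖ ^ 2 - 1)) t) ∧
      ∀ i t, 0 ≤ t → q t i = q 0 i * exp (-(2 * Λ i * t) - w t) := by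
  have hc : ContinuousOn (fun t => 4 * lam * (‖q t‖ ^ 2 - 1)) (Ici 0) := fun t ht =>
    (continuousAt_const.mul (((hq t ht).continuousAt.norm.pow 2).sub continuousAt_const))
      |>.continuousWithinAt
  obtain ⟨w, hw₀, hw⟩ := exists_hasDerivAt_of_continuousOn_Ici hc
  refine ⟨w, hw, fun i t ht => ?_⟩
  simpa [hw₀] using eq_mul_exp_of_hasDerivAt ht hw
    fun s hs => hasDerivAt_apply_of_gradientFlow (hq s hs) i

theorem norm_sq_mul_exp_eq {x x₀ : EuclideanSpace ℝ (Fin d)} {t w : ℝ}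
    (hx : ∀ i, x i = x₀ i * exp (-(2 * Λ i * t) - w)) :
    ‖x‖ ^ 2 * exp (2 * w) = ∑ i, x₀ i ^ 2 * exp (-(4 * Λ i * t)) := by
  rw [EuclideanSpace.norm_sq_eq, Finset.sum_mul]
  refine Finset.sum_congr rfl fun i _ => ?_
  rw [Real.norm_eq_abs, sq_abs, hx, mul_pow, mul_assoc, ← exp_nat_mul, ← exp_add]
  ring_nf

theorem tendsto_of_gradientFlow {i₀ : Fin d} (hΛ₀ : Λ i₀ = 0)
    (hΛ : ∀ i, i ≠ i₀ → 0 < Λ i) (hlam : 0 < lam)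
    (hq : ∀ t, 0 ≤ t → HasDerivAt q (-(gradient (loss Λ lam) (q t))) t) (hq₀ : q 0 i₀ ≠ 0) :
    Tendsto q atTop (𝓝 ((q 0 i₀ / |q 0 i₀|) • EuclideanSpace.single i₀ 1)) := by
  obtain ⟨w, hw, hcoord⟩ := exists_apply_eq_of_gradientFlow hq
  have hdecay (c : ℝ) (hc : 0 < c) := tendsto_exp_neg_mul_ite (μ := fun i => c * Λ i)
    (by simp [hΛ₀]) (fun i hi => mul_pos hc (hΛ i hi))
  set A := fun t => ∑ i, q 0 i ^ 2 * exp (-(4 * Λ i * t))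
  have hA : Tendsto A atTop (𝓝 (q 0 i₀ ^ 2)) := by
    simpa using
      tendsto_finsetSum Finset.univ fun i _ => (hdecay 4 four_pos i).const_mul (q 0 i ^ 2)
  -- `exp (2 w)` turns the Bernoulli equation for `‖q‖²` into a linear one.
  have hz : ∀ t, 0 ≤ t →
      HasDerivAt (fun s => exp (2 * w s)) (8 * lam * (A t - exp (2 * w t))) t := by
    intro t ht
    rw [show A t = ‖q t‖ ^ 2 * exp (2 * w t) from (norm_sq_mul_exp_eq (hcoord · t ht)).symm]
    exact ((hw t ht).const_mul 2).exp.congr_deriv (by ring)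
  have hexp : Tendsto (fun t => exp (-w t)) atTop (𝓝 |q 0 i₀|⁻¹) := by
    have := ((continuous_sqrt.tendsto _).comp
      (tendsto_of_hasDerivAt_eq_mul_sub (by positivity) hz hA)).inv₀ (by positivity)
    simpa [Function.comp_def, ← exp_half, sqrt_sq_eq_abs, exp_neg] using this
  rw [tendsto_euclideanSpace_iff]
  intro i
  have hi := ((hdecay 2 two_pos i).const_mul (q 0 i)).mul hexp
  convert hi.congr' ?_ using 2
  · by_cases h : i = i₀ <;> simp [h, div_eq_mul_inv]
  · filter_upwards [eventually_ge_atTop 0] with t ht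
    rw [hcoord i t ht, mul_assoc, ← exp_add, sub_eq_add_neg]

end GradientFlow

theorem stmt17_general (d : ℕ) (hd : 0 < d) (Λ : Fin d → ℝ)
    (hΛ1 : Λ ⟨0, hd⟩ = 0)
    (hΛpos : ∀ i : Fin d, i ≠ ⟨0, hd⟩ → 0 < Λ i)
    (lam : ℝ) (hlam : 0 < lam)
    (ℓ : EuclideanSpace ℝ (Fin d) → ℝ)
    (hℓ : ∀ q : EuclideanSpace ℝ (Fin d),
      ℓ q = ∑ i, Λ i * q i ^ 2 + lam * (‖q‖ ^ 2 - 1) ^ 2)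
    (q : ℝ → EuclideanSpace ℝ (Fin d))
    (hflow : ∀ t : ℝ, 0 ≤ t → HasDerivAt q (-(gradient ℓ (q t))) t) :
    (0 < q 0 ⟨0, hd⟩ →
      Tendsto q atTop (𝓝 (EuclideanSpace.single (⟨0, hd⟩ : Fin d) (1 : ℝ)))) ∧
    (q 0 ⟨0, hd⟩ < 0 →
      Tendsto q atTop (𝓝 (-(EuclideanSpace.single (⟨0, hd⟩ : Fin d) (1 : ℝ))))) := by
  obtain rfl : ℓ = loss Λ lam := funext hℓ
  have hlim := tendsto_of_gradientFlow hΛ1 hΛpos hlam hflow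
  refine ⟨fun h => ?_, fun h => ?_⟩
  · simpa [abs_of_pos h, h.ne'] using hlim h.ne'
  · simpa [abs_of_neg h, h.ne] using hlim h.ne

/-- For `D = diag(λ₁,…,λ_d)` with `0 = λ₁ < λ₂ ≤ … ≤ λ_d` and `λ > 0`,
any differentiable solution of the gradient flow `q'(t) = −∇ℓ(q(t))` on `[0,∞)` with
`e₁ᵀq(0) > 0` converges to `e₁` as `t → ∞` (and symmetrically, to `−e₁` if `e₁ᵀq(0) < 0`). -/
theorem stmt17 (d : ℕ) (hd : 0 < d) (Λ : Fin d → ℝ)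
    (hΛmono : Monotone Λ) (hΛ1 : Λ ⟨0, hd⟩ = 0)
    (hΛpos : ∀ i : Fin d, i ≠ ⟨0, hd⟩ → 0 < Λ i)
    (lam : ℝ) (hlam : 0 < lam)
    (ℓ : EuclideanSpace ℝ (Fin d) → ℝ)
    (hℓ : ∀ q : EuclideanSpace ℝ (Fin d),
      ℓ q = ∑ i, Λ i * q i ^ 2 + lam * (‖q‖ ^ 2 - 1) ^ 2)
    (q : ℝ → EuclideanSpace ℝ (Fin d))
    (hflow : ∀ t : ℝ, 0 ≤ t → HasDerivAt q (-(gradient ℓ (q t))) t) :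
    (0 < q 0 ⟨0, hd⟩ →
      Tendsto q atTop (𝓝 (EuclideanSpace.single (⟨0, hd⟩ : Fin d) (1 : ℝ)))) ∧
    (q 0 ⟨0, hd⟩ < 0 →
      Tendsto q atTop (𝓝 (-(EuclideanSpace.single (⟨0, hd⟩ : Fin d) (1 : ℝ))))) :=
  stmt17_general d hd Λ hΛ1 hΛpos lam hlam ℓ hℓ q hflow
end
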